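/- arXiv:2201.03524 — 6 statements merged into one kernel-verified Lean document; each statement's English description precedes it below -/
import Mathlib

section
/- Let B ⊆ ℝⁿ be a ball and let M be a measurable map from ℝⁿ to the real symmetric positive-definite n×n matrices whose logarithm log M is integrable on B, and set ω(x) := ‖M(x)‖ (spectral norm). Then ⨍_B |log ω(x) − ⟨log ω⟩_B| dx ≤ 2 ⨍_B ‖log M(x) − ⟨log M⟩_B‖ dx. Consequently |log ω|_{BMO(B)} ≤ 2 |log M|_{BMO(B)}. -/
/-!
For a self-adjoint `a`, `‖exp a‖ = exp (max σ(a))`, and `max σ(a) ≤ max σ(b) + ‖a - b‖` because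
`a ≤ b + ‖a - b‖ • 1`. Hence `A ↦ log ‖exp A‖` is 1-Lipschitz on symmetric matrices, so
`log ω x` stays within `‖L x - ⟨L⟩_B‖` of the constant `log ‖exp ⟨L⟩_B‖`; and replacing that
constant by the mean of `log ω` at most doubles the mean oscillation.
-/

open MeasureTheory Metric

/-- The spectral (operator) norm of a real `n × n` matrix, i.e. its operator norm as a
linear map on Euclidean space. -/
noncomputable def specNorm {n : ℕ} (A : Matrix (Fin n) (Fin n) ℝ) : ℝ :=
  ‖LinearMap.toContinuousLinearMap (Matrix.toEuclideanLin A)‖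

/-- The (entrywise) average `⟨L⟩_s` of a matrix-valued function over a set `s`. -/
noncomputable def matAvg {d n : ℕ} (s : Set (EuclideanSpace ℝ (Fin d)))
    (L : EuclideanSpace ℝ (Fin d) → Matrix (Fin n) (Fin n) ℝ) : Matrix (Fin n) (Fin n) ℝ :=
  Matrix.of fun i j => ⨍ x in s, L x i j

section Averages

variable {α : Type*} [MeasurableSpace α] {μ : Measure α} {g h : α → ℝ} {c : ℝ}

theorem integral_abs_sub_integral_le_two_mul [IsProbabilityMeasure μ]
    (hg : AEStronglyMeasurable g μ) (hh : Integrable h μ) (hgh : ∀ᵐ x ∂μ, |g x - c| ≤ h x) :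
    ∫ x, |g x - ∫ y, g y ∂μ| ∂μ ≤ 2 * ∫ x, h x ∂μ := by
  have hgc : Integrable (fun x => g x - c) μ :=
    hh.mono' (hg.sub aestronglyMeasurable_const) hgh
  have hg_int : Integrable g μ := by
    simpa using (integrable_add_const_iff (c := c)).2 hgc
  have hgc_le : ∫ x, |g x - c| ∂μ ≤ ∫ x, h x ∂μ := integral_mono_ae hgc.abs hh hgh
  have hmean : |c - ∫ y, g y ∂μ| ≤ ∫ x, h x ∂μ := by
    calc |c - ∫ y, g y ∂μ| = |∫ x, (g x - c) ∂μ| := by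
          rw [integral_sub hg_int (integrable_const c), integral_const, probReal_univ, one_smul,
            abs_sub_comm]
      _ ≤ ∫ x, |g x - c| ∂μ := abs_integral_le_integral_abs
      _ ≤ ∫ x, h x ∂μ := hgc_le
  calc ∫ x, |g x - ∫ y, g y ∂μ| ∂μ ≤ ∫ x, (|g x - c| + |c - ∫ y, g y ∂μ|) ∂μ :=
        integral_mono (hg_int.sub (integrable_const _)).abs
          (hgc.abs.add (integrable_const _)) fun x => abs_sub_le _ _ _
    _ = ∫ x, |g x - c| ∂μ + |c - ∫ y, g y ∂μ| := by
        rw [integral_add hgc.abs (integrable_const _), integral_const, probReal_univ, one_smul]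
    _ ≤ 2 * ∫ x, h x ∂μ := by linarith

theorem average_abs_sub_average_le_two_mul [IsFiniteMeasure μ]
    (hg : AEStronglyMeasurable g μ) (hh : Integrable h μ) (hgh : ∀ᵐ x ∂μ, |g x - c| ≤ h x) :
    ⨍ x, |g x - ⨍ y, g y ∂μ| ∂μ ≤ 2 * ⨍ x, h x ∂μ := by
  rcases eq_zero_or_neZero μ with rfl | _
  · simp
  simp only [average_eq']
  exact integral_abs_sub_integral_le_two_mul (hg.smul_measure _)
    (hh.smul_measure (by simpa using NeZero.ne μ)) (Measure.ae_smul_measure hgh _)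

end Averages

section SelfAdjoint

variable {A : Type*} [NormedRing A] [StarRing A] [NormedAlgebra ℝ A] [PartialOrder A]
  [StarOrderedRing A] [IsometricContinuousFunctionalCalculus ℝ A IsSelfAdjoint]

theorem IsSelfAdjoint.le_algebraMap_norm {a : A} (ha : IsSelfAdjoint a) :
    a ≤ algebraMap ℝ A ‖a‖ := by
  refine le_algebraMap_of_spectrum_le fun x hx => (Real.le_norm_self x).trans ?_
  simpa only [cfc_id ℝ a, id] using norm_apply_le_norm_cfc (id : ℝ → ℝ) a hx

variable [NonnegSpectrumClass ℝ A]

theorem IsSelfAdjoint.exists_spectrum_le_add_norm_sub [Nontrivial A] {a b : A}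
    (ha : IsSelfAdjoint a) (hb : IsSelfAdjoint b) :
    ∃ y ∈ spectrum ℝ b, ∀ x ∈ spectrum ℝ a, x ≤ y + ‖a - b‖ := by
  obtain ⟨y, hy, hmax⟩ :=
    (ContinuousFunctionalCalculus.isCompact_spectrum (R := ℝ) b).exists_isMaxOn
      (ContinuousFunctionalCalculus.spectrum_nonempty b hb) continuousOn_id
  refine ⟨y, hy, (le_algebraMap_iff_spectrum_le ha).mp ?_⟩
  calc a = b + (a - b) := (add_sub_cancel b a).symm
    _ ≤ algebraMap ℝ A y + algebraMap ℝ A ‖a - b‖ :=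
        add_le_add (le_algebraMap_of_spectrum_le hmax) (ha.sub hb).le_algebraMap_norm
    _ = algebraMap ℝ A (y + ‖a - b‖) := (map_add _ _ _).symm

theorem IsSelfAdjoint.log_norm_exp_le {a b : A} (ha : IsSelfAdjoint a) (hb : IsSelfAdjoint b) :
    Real.log ‖NormedSpace.exp a‖ ≤ Real.log ‖NormedSpace.exp b‖ + ‖a - b‖ := by
  nontriviality A
  obtain ⟨y, hy, hle⟩ := ha.exists_spectrum_le_add_norm_sub hb
  obtain ⟨x, hx, hxa⟩ := (IsGreatest.norm_cfc Real.exp a).1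
  have hyb := norm_apply_le_norm_cfc Real.exp b hy
  rw [CFC.real_exp_eq_normedSpace_exp] at hxa hyb
  simp only [Real.norm_eq_abs, Real.abs_exp] at hxa hyb
  rw [← hxa, Real.log_exp]
  have hy_le : y ≤ Real.log ‖NormedSpace.exp b‖ :=
    (Real.le_log_iff_exp_le ((Real.exp_pos y).trans_le hyb)).2 hyb
  linarith [hle x hx]

theorem IsSelfAdjoint.abs_log_norm_exp_sub_le {a b : A} (ha : IsSelfAdjoint a)
    (hb : IsSelfAdjoint b) :
    |Real.log ‖NormedSpace.exp a‖ - Real.log ‖NormedSpace.exp b‖| ≤ ‖a - b‖ := by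
  have hba := hb.log_norm_exp_le ha
  rw [norm_sub_rev] at hba
  rw [abs_sub_le_iff]
  constructor <;> linarith [ha.log_norm_exp_le hb]

end SelfAdjoint

section Matrix

open scoped Matrix.Norms.L2Operator MatrixOrder

theorem specNorm_eq_norm {n : ℕ} (A : Matrix (Fin n) (Fin n) ℝ) : specNorm A = ‖A‖ := rfl

theorem Matrix.IsSymm.isSelfAdjoint {n α : Type*} [Star α] [TrivialStar α] {A : Matrix n n α}
    (h : A.IsSymm) : IsSelfAdjoint A := by
  rw [IsSelfAdjoint, Matrix.star_eq_conjTranspose, Matrix.conjTranspose_eq_transpose_of_trivial,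
    h.eq]

theorem Matrix.integrable_of_forall_integrable_apply {α : Type*} [MeasurableSpace α]
    {μ : Measure α} {𝕜 : Type*} [RCLike 𝕜] {m n : Type*} [Fintype m] [Fintype n]
    [DecidableEq m] [DecidableEq n] {F : α → Matrix m n 𝕜}
    (hF : ∀ i j, Integrable (fun x => F x i j) μ) : Integrable F μ := by
  have : F = fun x => ∑ i, ∑ j, F x i j • Matrix.single i j (1 : 𝕜) := by
    funext x
    conv_lhs => rw [Matrix.matrix_eq_sum_single (F x)]
    simp only [Matrix.smul_single, smul_eq_mul, mul_one]
  rw [this]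
  exact integrable_finsetSum _ fun i _ => integrable_finsetSum _ fun j _ =>
    (hF i j).smul_const _

theorem Matrix.continuous_exp {𝕜 : Type*} [RCLike 𝕜] {n : Type*} [Fintype n] [DecidableEq n] :
    Continuous (NormedSpace.exp : Matrix n n 𝕜 → Matrix n n 𝕜) := by
  -- restricting scalars recovers, definitionally, the ℚ-algebra structure that `exp` is built on
  let : NormedAlgebra ℚ (Matrix n n 𝕜) := NormedAlgebra.restrictScalars ℚ 𝕜 _
  exact NormedSpace.exp_continuous

theorem abs_log_specNorm_exp_sub_le {n : ℕ} {A B : Matrix (Fin n) (Fin n) ℝ} (hA : A.IsSymm)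
    (hB : B.IsSymm) :
    |Real.log (specNorm (NormedSpace.exp A)) - Real.log (specNorm (NormedSpace.exp B))| ≤
      specNorm (A - B) :=
  hA.isSelfAdjoint.abs_log_norm_exp_sub_le hB.isSelfAdjoint

theorem isSymm_matAvg {d n : ℕ} {s : Set (EuclideanSpace ℝ (Fin d))}
    {L : EuclideanSpace ℝ (Fin d) → Matrix (Fin n) (Fin n) ℝ} (hL : ∀ x, (L x).IsSymm) :
    (matAvg s L).IsSymm :=
  Matrix.IsSymm.ext fun i j => by simp only [matAvg, Matrix.of_apply, (hL _).apply]

theorem average_abs_log_specNorm_sub_le {d n : ℕ} {s : Set (EuclideanSpace ℝ (Fin d))}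
    (hs : volume s ≠ ⊤) {M L : EuclideanSpace ℝ (Fin d) → Matrix (Fin n) (Fin n) ℝ}
    (hsymm : ∀ x, (L x).IsSymm) (hexp : ∀ x, NormedSpace.exp (L x) = M x)
    (hint : ∀ i j, IntegrableOn (fun x => L x i j) s) :
    (⨍ x in s, |Real.log (specNorm (M x)) - ⨍ y in s, Real.log (specNorm (M y))|) ≤
      2 * ⨍ x in s, specNorm (L x - matAvg s L) := by
  have : IsFiniteMeasure (volume.restrict s) := isFiniteMeasure_restrict.2 hs
  have hL : Integrable L (volume.restrict s) := Matrix.integrable_of_forall_integrable_apply hint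
  have hlog : AEStronglyMeasurable (fun x => Real.log (specNorm (M x))) (volume.restrict s) := by
    simp only [← hexp, specNorm_eq_norm]
    exact (Real.measurable_log.comp_aemeasurable
      ((continuous_norm.comp Matrix.continuous_exp).comp_aestronglyMeasurable
        hL.aestronglyMeasurable).aemeasurable).aestronglyMeasurable
  refine average_abs_sub_average_le_two_mul
    (c := Real.log (specNorm (NormedSpace.exp (matAvg s L)))) hlog
    (hL.sub (integrable_const _)).norm (ae_of_all _ fun x => ?_)
  rw [← hexp x]
  exact abs_log_specNorm_exp_sub_le (hsymm x) (isSymm_matAvg hsymm)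

end Matrix

theorem stmt3_general (n : ℕ) (x₀ : EuclideanSpace ℝ (Fin n)) (R : ℝ)
    (M L : EuclideanSpace ℝ (Fin n) → Matrix (Fin n) (Fin n) ℝ)
    (hsymm : ∀ x, (L x).IsSymm)
    (hexp : ∀ x, NormedSpace.exp (L x) = M x)
    (hint : ∀ i j, IntegrableOn (fun x => L x i j) (ball x₀ R)) :
    (⨍ x in ball x₀ R,
        |Real.log (specNorm (M x)) - ⨍ y in ball x₀ R, Real.log (specNorm (M y))|) ≤
      2 * ⨍ x in ball x₀ R, specNorm (L x - matAvg (ball x₀ R) L) ∧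
    ∀ (c : EuclideanSpace ℝ (Fin n)) (r : ℝ), 0 < r → ball c r ⊆ ball x₀ R →
      (⨍ x in ball c r,
          |Real.log (specNorm (M x)) - ⨍ y in ball c r, Real.log (specNorm (M y))|) ≤
        2 * ⨍ x in ball c r, specNorm (L x - matAvg (ball c r) L) := by
  refine ⟨average_abs_log_specNorm_sub_le measure_ball_lt_top.ne hsymm hexp hint,
    fun c r _ hsub => ?_⟩
  exact average_abs_log_specNorm_sub_le measure_ball_lt_top.ne hsymm hexp
    fun i j => (hint i j).mono_set hsub

/-- Let `B ⊆ ℝⁿ` be a ball and `M` a measurable map into the real symmetric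
positive-definite `n × n` matrices, with (matrix) logarithm `L` (i.e. `exp (L x) = M x`, `L x`
symmetric) integrable on `B`; set `ω x := ‖M x‖` (spectral norm).  Then
`⨍_B |log ω - ⟨log ω⟩_B| ≤ 2 ⨍_B ‖L - ⟨L⟩_B‖`, and consequently the same estimate holds on
every ball `B' ⊆ B`, whence `|log ω|_{BMO(B)} ≤ 2 |log M|_{BMO(B)}`. -/
theorem stmt3 (n : ℕ) (x₀ : EuclideanSpace ℝ (Fin n)) (R : ℝ) (hR : 0 < R)
    (M L : EuclideanSpace ℝ (Fin n) → Matrix (Fin n) (Fin n) ℝ)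
    (hMmeas : ∀ i j, Measurable fun x => M x i j)
    (hpos : ∀ x, (M x).PosDef)
    (hsymm : ∀ x, (L x).IsSymm)
    (hexp : ∀ x, NormedSpace.exp (L x) = M x)
    (hint : ∀ i j, IntegrableOn (fun x => L x i j) (ball x₀ R)) :
    (⨍ x in ball x₀ R,
        |Real.log (specNorm (M x)) - ⨍ y in ball x₀ R, Real.log (specNorm (M y))|) ≤
      2 * ⨍ x in ball x₀ R, specNorm (L x - matAvg (ball x₀ R) L) ∧
    ∀ (c : EuclideanSpace ℝ (Fin n)) (r : ℝ), 0 < r → ball c r ⊆ ball x₀ R →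
      (⨍ x in ball c r,
          |Real.log (specNorm (M x)) - ⨍ y in ball c r, Real.log (specNorm (M y))|) ≤
        2 * ⨍ x in ball c r, specNorm (L x - matAvg (ball c r) L) :=
  stmt3_general n x₀ R M L hsymm hexp hint
end

section
/- Let n ≥ 2, δ ∈ [0, 1/(2n)], R > 0, and let Ω ⊆ ℝⁿ be a bounded open set which is (δ, 4R)-Lipschitz. Then for every y ∈ Ω and every radius 0 < r ≤ 4R, one has |Ω ∩ B_r(y)| ≥ 4^{−n} |B_r(y)|, where B_r(y) is the open ball of radius r centered at y and |·| denotes Lebesgue measure. -/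
open MeasureTheory Metric
open scoped ENNReal

/-- A bounded open set `Ω ⊆ ℝⁿ` (here `n = m + 1`) is `(δ, R)`-Lipschitz if near every
boundary point, after a rigid motion taking the boundary point to the origin, `Ω` agrees in
`B_R(0)` with the region above the graph of a `δ`-Lipschitz function `ψ : ℝ^{n-1} → ℝ`. -/
def IsDeltaRLipschitz (m : ℕ) (δ R : ℝ) (Ω : Set (EuclideanSpace ℝ (Fin (m + 1)))) : Prop :=
  ∀ x₀ ∈ frontier Ω,
    ∃ (O : EuclideanSpace ℝ (Fin (m + 1)) ≃ₗᵢ[ℝ] EuclideanSpace ℝ (Fin (m + 1)))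
      (ψ : EuclideanSpace ℝ (Fin m) → ℝ),
      LipschitzWith (Real.toNNReal δ) ψ ∧
      (fun x => O (x - x₀)) '' Ω ∩ ball 0 R =
        {x ∈ ball (0 : EuclideanSpace ℝ (Fin (m + 1))) R |
          ψ (WithLp.toLp 2 (fun i : Fin m => x (Fin.castSucc i))) < x (Fin.last m)}

/-!
If `B_{r/4}(y) ⊆ Ω` there is nothing to prove. Otherwise the connected ball `B_{r/4}(y)` meets
`∂Ω` at some `x₀`. In the chart at `x₀`, `Ω` is the strict epigraph of a `δ`-Lipschitz `ψ` with
`ψ(0) ≤ 0`, which contains the cone `xₙ > δ |x'|` and hence the ball of radius `ρ = r/4` centred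
at height `(1 + δ)ρ` on the `xₙ`-axis. Since `δ ≤ 1` this ball stays inside the chart domain
`B_{4R}` and, pulled back, inside `B_r(y)`. Either way `Ω ∩ B_r(y)` contains a ball of radius `r/4`.
-/

open scoped NNReal

theorem IsPreconnected.inter_frontier_nonempty {X : Type*} [TopologicalSpace X] {s t : Set X}
    (hs : IsPreconnected s) (hst : (s ∩ t).Nonempty) (hst' : (s \ t).Nonempty) :
    (s ∩ frontier t).Nonempty := by
  have := isPreconnected_iff_preconnectedSpace.1 hs
  obtain ⟨x, hxs, hxt⟩ := hst
  obtain ⟨z, hzs, hzt⟩ := hst'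
  obtain ⟨x, hx⟩ := (nonempty_frontier_iff (s := ((↑) : s → X) ⁻¹' t)).2
    ⟨⟨⟨x, hxs⟩, hxt⟩, fun h => hzt (h.symm ▸ Set.mem_univ (⟨z, hzs⟩ : s) :)⟩
  exact ⟨x, x.2, continuous_subtype_val.frontier_preimage_subset t hx⟩

theorem inv_four_pow_mul_addHaar_ball_le {E : Type*} [NormedAddCommGroup E] [NormedSpace ℝ E]
    [MeasurableSpace E] [BorelSpace E] [FiniteDimensional ℝ E] (μ : Measure E)
    [μ.IsAddHaarMeasure] (x y : E) {r ρ : ℝ} (hρ : r / 4 ≤ ρ) :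
    (4 : ℝ≥0∞)⁻¹ ^ Module.finrank ℝ E * μ (ball x r) ≤ μ (ball y ρ) := by
  have hball : μ (ball x r) = 4 ^ Module.finrank ℝ E * μ (ball y (r / 4)) := by
    rw [← mul_div_cancel₀ r (four_ne_zero' ℝ), Measure.addHaar_ball_mul_of_pos μ x four_pos,
      Measure.addHaar_ball_center μ y, mul_div_cancel_left₀ _ (four_ne_zero' ℝ)]
    norm_num [ENNReal.ofReal_pow]
  calc (4 : ℝ≥0∞)⁻¹ ^ Module.finrank ℝ E * μ (ball x r) = μ (ball y (r / 4)) := by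
        rw [hball, ← mul_assoc, ← mul_pow, ENNReal.inv_mul_cancel (by norm_num) (by norm_num),
          one_pow, one_mul]
    _ ≤ μ (ball y ρ) := measure_mono (ball_subset_ball hρ)

namespace EuclideanSpace

variable {m : ℕ}

/-- The paper's `x'` in `x = (x', xₙ)`. -/
def init (x : EuclideanSpace ℝ (Fin (m + 1))) : EuclideanSpace ℝ (Fin m) :=
  WithLp.toLp 2 (fun i => x (Fin.castSucc i))

@[simp]
theorem init_apply (x : EuclideanSpace ℝ (Fin (m + 1))) (i : Fin m) :
    init x i = x (Fin.castSucc i) := rfl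

@[simp]
theorem init_sub (x y : EuclideanSpace ℝ (Fin (m + 1))) : init (x - y) = init x - init y := by
  ext i; simp

@[simp]
theorem init_zero : init (0 : EuclideanSpace ℝ (Fin (m + 1))) = 0 := rfl

@[simp]
theorem init_single_last (t : ℝ) : init (single (Fin.last m) t) = 0 := by
  ext i; simp [(Fin.castSucc_lt_last i).ne]

theorem continuous_init : Continuous (init (m := m)) := by
  unfold init; fun_prop

theorem norm_init_le (x : EuclideanSpace ℝ (Fin (m + 1))) : ‖init x‖ ≤ ‖x‖ := by
  refine sq_le_sq₀ (norm_nonneg _) (norm_nonneg _) |>.1 ?_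
  rw [real_norm_sq_eq, real_norm_sq_eq, Fin.sum_univ_castSucc]
  simp only [init_apply]
  linarith [sq_nonneg (x (Fin.last m))]

end EuclideanSpace

open EuclideanSpace

def strictEpigraph {m : ℕ} (ψ : EuclideanSpace ℝ (Fin m) → ℝ) :
    Set (EuclideanSpace ℝ (Fin (m + 1))) :=
  {x | ψ (init x) < x (Fin.last m)}

theorem ball_subset_strictEpigraph {m : ℕ} {K : ℝ≥0} {ψ : EuclideanSpace ℝ (Fin m) → ℝ}
    (hψ : LipschitzWith K ψ) (hψ0 : ψ 0 ≤ 0) (ρ : ℝ) :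
    ball (single (Fin.last m) ((1 + K) * ρ)) ρ ⊆ strictEpigraph ψ := by
  intro x hx
  set c := single (Fin.last m) ((1 + K) * ρ)
  have hxc : ‖x - c‖ < ρ := mem_ball_iff_norm.1 hx
  have hinit : ‖init x‖ < ρ := by
    simpa only [init_sub, c, init_single_last, sub_zero] using (norm_init_le (x - c)).trans_lt hxc
  have hlast : K * ρ < x (Fin.last m) := by
    have := (abs_lt.1 ((PiLp.norm_apply_le (x - c) (Fin.last m)).trans_lt hxc)).1
    simp only [PiLp.sub_apply, c, PiLp.single_apply, if_true] at this
    linarith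
  calc ψ (init x) ≤ ψ 0 + K * dist (init x) 0 := hψ.le_add_mul _ _
    _ ≤ K * ρ := by
        rw [dist_zero_right]
        nlinarith [K.coe_nonneg]
    _ < x (Fin.last m) := hlast

theorem closure_strictEpigraph_subset {m : ℕ} {ψ : EuclideanSpace ℝ (Fin m) → ℝ}
    (hψ : Continuous ψ) : closure (strictEpigraph ψ) ⊆ {x | ψ (init x) ≤ x (Fin.last m)} :=
  closure_lt_subset_le (hψ.comp continuous_init) (PiLp.continuous_apply 2 _ _)

theorem IsDeltaRLipschitz.exists_ball_subset {m : ℕ} {δ R ρ : ℝ}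
    {Ω : Set (EuclideanSpace ℝ (Fin (m + 1)))} (hΩ : IsDeltaRLipschitz m δ R Ω)
    {x₀ : EuclideanSpace ℝ (Fin (m + 1))} (hx₀ : x₀ ∈ frontier Ω) (hρ : 0 < ρ)
    (hρR : (2 + δ.toNNReal) * ρ ≤ R) :
    ∃ z, dist z x₀ = (1 + δ.toNNReal) * ρ ∧ ball z ρ ⊆ Ω := by
  obtain ⟨O, ψ, hψ, hchart⟩ := hΩ x₀ hx₀
  set φ := (IsometryEquiv.subRight x₀).trans O.toIsometryEquiv
  have hφx₀ : φ x₀ = 0 := by simp [φ]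
  replace hchart : φ '' Ω ∩ ball 0 R = ball 0 R ∩ strictEpigraph ψ := hchart
  have hψ0 : ψ 0 ≤ 0 := by
    have hR : 0 < R := by nlinarith [δ.toNNReal.coe_nonneg]
    have h0 : (0 : EuclideanSpace ℝ (Fin (m + 1))) ∈ closure (strictEpigraph ψ) := by
      have hcl : φ x₀ ∈ closure (φ '' Ω) :=
        φ.toHomeomorph.image_closure Ω ▸ Set.mem_image_of_mem φ hx₀.1
      have h := isOpen_ball.inter_closure ⟨mem_ball_self hR, hφx₀ ▸ hcl⟩
      rw [Set.inter_comm, hchart] at h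
      exact closure_mono Set.inter_subset_right h
    simpa using closure_strictEpigraph_subset hψ.continuous h0
  set c := single (Fin.last m) ((1 + δ.toNNReal) * ρ)
  have hc : ‖c‖ = (1 + δ.toNNReal) * ρ := by
    rw [PiLp.norm_single, Real.norm_of_nonneg (by positivity)]
  have hball : ball c ρ ⊆ φ '' Ω := by
    have hsub : ball c ρ ⊆ ball 0 R := ball_subset_ball' (by rw [dist_zero_right, hc]; linarith)
    intro x hx
    have : x ∈ ball 0 R ∩ strictEpigraph ψ := ⟨hsub hx, ball_subset_strictEpigraph hψ hψ0 ρ hx⟩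
    exact (hchart ▸ this).1
  refine ⟨φ.symm c, ?_, ?_⟩
  · rw [← φ.dist_eq, φ.apply_symm_apply, hφx₀, dist_zero_right, hc]
  · rw [← φ.symm.image_ball]
    exact (Set.image_mono hball).trans (φ.symm_image_image Ω).subset

theorem stmt6_general (m : ℕ) (δ R : ℝ)
    (hδ : δ ≤ 1 / (2 * (m + 1 : ℝ)))
    (Ω : Set (EuclideanSpace ℝ (Fin (m + 1))))
    (hlip : IsDeltaRLipschitz m δ (4 * R) Ω) :
    ∀ y ∈ Ω, ∀ r : ℝ, 0 < r → r ≤ 4 * R →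
      (4 : ℝ≥0∞)⁻¹ ^ (m + 1) * volume (ball y r) ≤ volume (Ω ∩ ball y r) := by
  intro y hy r hr hr4R
  have hK : (δ.toNNReal : ℝ) * r ≤ r := by
    refine mul_le_of_le_one_left hr.le (max_le (hδ.trans ?_) zero_le_one)
    rw [div_le_one (by positivity)]
    linarith [(m.cast_nonneg : (0 : ℝ) ≤ m)]
  have hvol : ∀ z, ball z (r / 4) ⊆ Ω ∩ ball y r →
      (4 : ℝ≥0∞)⁻¹ ^ (m + 1) * volume (ball y r) ≤ volume (Ω ∩ ball y r) := fun z hz => by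
    simpa only [finrank_euclideanSpace_fin] using
      (inv_four_pow_mul_addHaar_ball_le volume y z le_rfl).trans (measure_mono hz)
  by_cases hc : ball y (r / 4) ⊆ Ω
  · exact hvol y (Set.subset_inter hc (ball_subset_ball (by linarith)))
  obtain ⟨x₀, hx₀y, hx₀⟩ := (convex_ball y (r / 4)).isPreconnected.inter_frontier_nonempty
    ⟨y, mem_ball_self (by positivity), hy⟩ (Set.sdiff_nonempty.2 hc)
  obtain ⟨z, hzx₀, hz⟩ := hlip.exists_ball_subset (ρ := r / 4) hx₀ (by positivity) (by linarith)
  refine hvol z (Set.subset_inter hz (ball_subset_ball' ?_))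
  linarith [dist_triangle z x₀ y, mem_ball.1 hx₀y]

/-- Let `n = m + 1 ≥ 2`, `δ ∈ [0, 1/(2n)]`, `R > 0`, and let `Ω ⊆ ℝⁿ` be a
bounded open `(δ, 4R)`-Lipschitz set.  Then for every `y ∈ Ω` and every `0 < r ≤ 4R`,
`|Ω ∩ B_r(y)| ≥ 4^{-n} |B_r(y)|`. -/
theorem stmt6 (m : ℕ) (hm : 1 ≤ m) (δ R : ℝ)
    (hδ0 : 0 ≤ δ) (hδ : δ ≤ 1 / (2 * (m + 1 : ℝ))) (hR : 0 < R)
    (Ω : Set (EuclideanSpace ℝ (Fin (m + 1))))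
    (hΩopen : IsOpen Ω) (hΩbdd : Bornology.IsBounded Ω)
    (hlip : IsDeltaRLipschitz m δ (4 * R) Ω) :
    ∀ y ∈ Ω, ∀ r : ℝ, 0 < r → r ≤ 4 * R →
      (4 : ℝ≥0∞)⁻¹ ^ (m + 1) * volume (ball y r) ≤ volume (Ω ∩ ball y r) :=
  stmt6_general m δ R hδ Ω hlip
end

section
/- Let n ≥ 2, δ ∈ [0, 1/(2n)], R > 0, and let Ω ⊆ ℝⁿ be a bounded open set which is (δ, 4R)-Lipschitz. Then for every boundary point y ∈ ∂Ω and every radius 0 < r ≤ 4R, one has |B_r(y) ∩ (ℝⁿ \ Ω)| ≥ 4^{−n} |B_r(y)|, where B_r(y) is the open ball of radius r centered at y and |·| denotes Lebesgue measure. -/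
open MeasureTheory Metric
open scoped ENNReal

/-!
Translate and rotate so that the boundary point `y` is the origin and `Ω` lies above the graph
of `ψ` near it. Since `y ∉ Ω`, `ψ 0 ≥ 0`, and since `ψ` is `1`-Lipschitz, the ball of radius
`r / 4` centred at `-(r / 2) eₙ` lies below the graph, hence outside `Ω`, and inside `B_r(0)`;
its volume is exactly `4⁻ⁿ |B_r|`.
-/

lemma LinearIsometryEquiv.dist_map_sub {E : Type*} [NormedAddCommGroup E] [NormedSpace ℝ E]
    (O : E ≃ₗᵢ[ℝ] E) (x y c : E) : dist (O (x - y)) c = dist x (y + O.symm c) := by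
  rw [dist_eq_norm, dist_eq_norm, ← O.norm_map (x - (y + O.symm c)), sub_add_eq_sub_sub,
    map_sub _ (x - y), O.apply_symm_apply]

section Chart

variable {m : ℕ}

lemma EuclideanSpace.norm_toLp_castSucc_le (x : EuclideanSpace ℝ (Fin (m + 1))) :
    ‖(WithLp.toLp 2 fun i : Fin m => x i.castSucc : EuclideanSpace ℝ (Fin m))‖ ≤ ‖x‖ := by
  rw [EuclideanSpace.norm_eq, EuclideanSpace.norm_eq, Fin.sum_univ_castSucc]
  exact Real.sqrt_le_sqrt (le_add_of_nonneg_right (sq_nonneg _))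

lemma ball_single_last_subset_subgraph {ψ : EuclideanSpace ℝ (Fin m) → ℝ} {K : NNReal}
    (hψ : LipschitzWith K ψ) (hK : K ≤ 1) (hψ0 : 0 ≤ ψ 0) (r : ℝ) :
    ball (EuclideanSpace.single (Fin.last m) (-(r / 2))) (r / 4) ⊆
      {x | x (Fin.last m) < ψ (WithLp.toLp 2 fun i : Fin m => x i.castSucc)} := by
  intro x hx
  set c : EuclideanSpace ℝ (Fin (m + 1)) := EuclideanSpace.single (Fin.last m) (-(r / 2))
  rw [mem_ball, dist_eq_norm] at hx
  set x' : EuclideanSpace ℝ (Fin m) := WithLp.toLp 2 fun i : Fin m => x i.castSucc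
  have hx' : x' = WithLp.toLp 2 fun i : Fin m => (x - c) i.castSucc := by
    ext i
    simp [x', c, (Fin.castSucc_lt_last i).ne]
  have hx'_norm : ‖x'‖ < r / 4 :=
    hx' ▸ (EuclideanSpace.norm_toLp_castSucc_le (x - c)).trans_lt hx
  have hx_last : x (Fin.last m) < -(r / 4) := by
    have h := (Real.le_norm_self _).trans_lt
      ((PiLp.norm_apply_le (x - c) (Fin.last m)).trans_lt hx)
    simp only [PiLp.sub_apply, c, PiLp.single_apply, ↓reduceIte] at h
    linarith
  have hψx' : ψ 0 - ‖x'‖ ≤ ψ x' := by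
    have h := (abs_le.1 (hψ.dist_le_mul x' 0)).1
    rw [dist_zero_right] at h
    linarith [mul_le_of_le_one_left (norm_nonneg x') (show (K : ℝ) ≤ 1 from hK)]
  show x (Fin.last m) < ψ x'
  linarith

lemma chart_nonneg_at_zero {Ω : Set (EuclideanSpace ℝ (Fin (m + 1)))}
    {y : EuclideanSpace ℝ (Fin (m + 1))} (hy : y ∉ Ω)
    {O : EuclideanSpace ℝ (Fin (m + 1)) ≃ₗᵢ[ℝ] EuclideanSpace ℝ (Fin (m + 1))}
    {ψ : EuclideanSpace ℝ (Fin m) → ℝ} {R : ℝ} (hR : 0 < R)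
    (hchart : (fun x => O (x - y)) '' Ω ∩ ball 0 R =
      {x ∈ ball (0 : EuclideanSpace ℝ (Fin (m + 1))) R |
        ψ (WithLp.toLp 2 (fun i : Fin m => x (Fin.castSucc i))) < x (Fin.last m)}) :
    0 ≤ ψ 0 := by
  by_contra! hψ0
  have h0 : (0 : EuclideanSpace ℝ (Fin (m + 1))) ∈ (fun x => O (x - y)) '' Ω ∩ ball 0 R :=
    hchart ▸ ⟨mem_ball_self hR, hψ0⟩
  obtain ⟨⟨x, hx, hxy⟩, -⟩ := h0
  rw [map_eq_zero_iff O O.injective, sub_eq_zero] at hxy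
  exact hy (hxy ▸ hx)

lemma ball_subset_inter_compl_of_chart {Ω : Set (EuclideanSpace ℝ (Fin (m + 1)))}
    {y : EuclideanSpace ℝ (Fin (m + 1))} (hy : y ∉ Ω)
    {O : EuclideanSpace ℝ (Fin (m + 1)) ≃ₗᵢ[ℝ] EuclideanSpace ℝ (Fin (m + 1))}
    {ψ : EuclideanSpace ℝ (Fin m) → ℝ} {K : NNReal} (hψ : LipschitzWith K ψ) (hK : K ≤ 1)
    {R : ℝ} (hchart : (fun x => O (x - y)) '' Ω ∩ ball 0 R =
      {x ∈ ball (0 : EuclideanSpace ℝ (Fin (m + 1))) R |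
        ψ (WithLp.toLp 2 (fun i : Fin m => x (Fin.castSucc i))) < x (Fin.last m)})
    {r : ℝ} (hr : 0 < r) (hrR : r ≤ R) :
    ball (y + O.symm (EuclideanSpace.single (Fin.last m) (-(r / 2)))) (4⁻¹ * r) ⊆
      ball y r ∩ Ωᶜ := by
  set c : EuclideanSpace ℝ (Fin (m + 1)) := EuclideanSpace.single (Fin.last m) (-(r / 2))
  have hc : ‖c‖ = r / 2 := by simp [c, abs_of_pos hr]
  intro x hx
  have hTx : O (x - y) ∈ ball c (r / 4) := by
    rw [mem_ball, O.dist_map_sub]; linarith [mem_ball.1 hx]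
  have hTx_ball : O (x - y) ∈ ball 0 r :=
    ball_subset_ball' (by rw [dist_zero_right, hc]; linarith) hTx
  refine ⟨by rwa [mem_ball_zero_iff, O.norm_map, ← dist_eq_norm] at hTx_ball, fun hxΩ => ?_⟩
  have hmem : O (x - y) ∈ (fun x => O (x - y)) '' Ω ∩ ball 0 R :=
    ⟨⟨x, hxΩ, rfl⟩, ball_subset_ball hrR hTx_ball⟩
  rw [hchart] at hmem
  exact (ball_single_last_subset_subgraph hψ hK
    (chart_nonneg_at_zero hy (hr.trans_le hrR) hchart) r hTx).not_gt hmem.2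

end Chart

lemma volume_ball_mul_four_inv {E : Type*} [NormedAddCommGroup E] [NormedSpace ℝ E]
    [FiniteDimensional ℝ E] [MeasurableSpace E] [BorelSpace E] [Nontrivial E]
    (μ : Measure E) [μ.IsAddHaarMeasure] (x y : E) (r : ℝ) :
    μ (ball x (4⁻¹ * r)) = (4 : ℝ≥0∞)⁻¹ ^ Module.finrank ℝ E * μ (ball y r) := by
  rw [Measure.addHaar_ball_mul μ x (by norm_num), Measure.addHaar_ball_center μ y,
    ENNReal.ofReal_pow (by norm_num), ENNReal.ofReal_inv_of_pos (by norm_num),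
    ENNReal.ofReal_ofNat]

theorem stmt7_general (m : ℕ) (δ R : ℝ)
    (hδ : δ ≤ 1 / (2 * (m + 1 : ℝ)))
    (Ω : Set (EuclideanSpace ℝ (Fin (m + 1))))
    (hΩopen : IsOpen Ω)
    (hlip : IsDeltaRLipschitz m δ (4 * R) Ω) :
    ∀ y ∈ frontier Ω, ∀ r : ℝ, 0 < r → r ≤ 4 * R →
      (4 : ℝ≥0∞)⁻¹ ^ (m + 1) * volume (ball y r) ≤ volume (ball y r ∩ Ωᶜ) := by
  intro y hy r hr hr4R
  obtain ⟨O, ψ, hψ, hchart⟩ := hlip y hy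
  have hyΩ : y ∉ Ω := (hΩopen.frontier_eq ▸ hy).2
  have hδ1 : Real.toNNReal δ ≤ 1 := Real.toNNReal_le_one.2 <| hδ.trans <| by
    rw [div_le_one (by positivity)]; linarith [(m.cast_nonneg : (0 : ℝ) ≤ m)]
  calc (4 : ℝ≥0∞)⁻¹ ^ (m + 1) * volume (ball y r)
      = volume (ball (y + O.symm (EuclideanSpace.single (Fin.last m) (-(r / 2))))
          (4⁻¹ * r)) := by
        rw [volume_ball_mul_four_inv, finrank_euclideanSpace_fin]
    _ ≤ volume (ball y r ∩ Ωᶜ) :=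
        measure_mono (ball_subset_inter_compl_of_chart hyΩ hψ hδ1 hchart hr hr4R)

/-- Let `n = m + 1 ≥ 2`, `δ ∈ [0, 1/(2n)]`, `R > 0`, and let `Ω ⊆ ℝⁿ` be a
bounded open `(δ, 4R)`-Lipschitz set.  Then for every boundary point `y ∈ ∂Ω` and every
`0 < r ≤ 4R`, `|B_r(y) ∩ (ℝⁿ \\ Ω)| ≥ 4^{-n} |B_r(y)|`. -/
theorem stmt7 (m : ℕ) (hm : 1 ≤ m) (δ R : ℝ)
    (hδ0 : 0 ≤ δ) (hδ : δ ≤ 1 / (2 * (m + 1 : ℝ))) (hR : 0 < R)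
    (Ω : Set (EuclideanSpace ℝ (Fin (m + 1))))
    (hΩopen : IsOpen Ω) (hΩbdd : Bornology.IsBounded Ω)
    (hlip : IsDeltaRLipschitz m δ (4 * R) Ω) :
    ∀ y ∈ frontier Ω, ∀ r : ℝ, 0 < r → r ≤ 4 * R →
      (4 : ℝ≥0∞)⁻¹ ^ (m + 1) * volume (ball y r) ≤ volume (ball y r ∩ Ωᶜ) :=
  stmt7_general m δ R hδ Ω hΩopen hlip
end

section
/- Let n ≥ 2, p ∈ (1,∞) and Λ ≥ 1. Let M₀ be a real symmetric positive-definite n×n matrix, set ω₀ := ‖M₀‖ (spectral norm), and assume Λ^{−1} ω₀ |ξ| ≤ |M₀ξ| ≤ ω₀|ξ| for all ξ ∈ ℝⁿ. Let v ∈ ℝ^{n−1} with |v| ≤ 1/2, let N := N(v) and T := N^{−1}. Then there is a constant c depending only on n, p and Λ such that for all ξ ∈ ℝⁿ: | |M₀ξ|^{p−2} M₀² ξ − Tᵗ |M₀Tξ|^{p−2} M₀² Tξ | ≤ c |v| ω₀^p · min( |ξ|^{p−1}, |Tξ|^{p−1} ), where Tᵗ is the transpose of T. -/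
open Matrix

/-- The Euclidean norm of a vector in `ℝᵏ`. -/
noncomputable def euclNorm {k : ℕ} (x : Fin k → ℝ) : ℝ :=
  Real.sqrt (∑ i, x i ^ 2)

/-- For `v ∈ ℝ^{n-1}` (with `n = m + 1`), the matrix `N(v)` with all diagonal entries `1`,
last-row entries `N_{n,j} = -v_j` for `j ≤ n - 1`, and all other entries `0`; this is the
Jacobian of the shear map `Ψ(x', xₙ) = (x', xₙ - ψ x')` when `v = ∇ψ(x')`. -/
def shearN (m : ℕ) (v : Fin m → ℝ) : Matrix (Fin (m + 1)) (Fin (m + 1)) ℝ :=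
  1 + Matrix.of (fun i j : Fin (m + 1) =>
    if h : i = Fin.last m ∧ (j : ℕ) < m then -v ⟨(j : ℕ), h.2⟩ else 0)

/-!
Write `G a = |a|^{p-2} a` and `F ζ = M₀ G(M₀ ζ)`, so that the left-hand side is
`|F ξ - Tᵀ F η|` with `η = T ξ`. Since `N = 1 + E` with `E² = 0`, we have `T = 1 - E`, and
both `T` and `Tᵀ` differ from the identity by at most `|v|` in operator norm (the Frobenius
norm of `E` is `|v|`); in particular `|ξ|` and `|η|` agree up to a factor `2`. Split
`F ξ - Tᵀ F η = (F ξ - F η) + (1 - Tᵀ) F η`. The second term is at most `|v| ω₀^p |η|^{p-1}`.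
For the first, if `2Λ|v| ≤ 1` then `a = M₀ ξ` and `b = M₀ η` satisfy
`|a - b| ≤ Λ|v||a| ≤ |a|/2`, and near such `a` the map `G` is Lipschitz with constant
`≲ |a|^{p-2}` by the mean value theorem for `t ↦ t^{p-2}` on `[|a|/2, 2|a|]`; if `2Λ|v| > 1`,
the crude bound `|F ξ| + |F η|` is already `O(|v|)`.
-/

section pGrad

variable {E : Type*} [NormedAddCommGroup E] [NormedSpace ℝ E]

noncomputable def pGrad (p : ℝ) (a : E) : E := ‖a‖ ^ (p - 2) • a

noncomputable def pGradLipConst (p : ℝ) : ℝ := 1 + 2 * |p - 2| * 2 ^ |p - 3|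

lemma one_le_pGradLipConst (p : ℝ) : 1 ≤ pGradLipConst p :=
  le_add_of_nonneg_right (by positivity)

lemma norm_pGrad {p : ℝ} (hp : 1 < p) (a : E) : ‖pGrad p a‖ = ‖a‖ ^ (p - 1) := by
  rw [pGrad, norm_smul, Real.norm_of_nonneg (by positivity),
    ← Real.rpow_add_one' (norm_nonneg a) (by linarith)]
  ring_nf

lemma rpow_le_two_rpow_abs_mul_rpow {q A x : ℝ} (hA : 0 < A)
    (hx : x ∈ Set.Icc (A / 2) (2 * A)) :
    x ^ q ≤ 2 ^ |q| * A ^ q := by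
  have hx0 : 0 < x := lt_of_lt_of_le (by linarith) hx.1
  rcases le_or_gt 0 q with hq | hq
  · calc x ^ q ≤ (2 * A) ^ q := Real.rpow_le_rpow hx0.le hx.2 hq
      _ = 2 ^ |q| * A ^ q := by rw [abs_of_nonneg hq, Real.mul_rpow zero_le_two hA.le]
  · calc x ^ q ≤ (A / 2) ^ q := Real.rpow_le_rpow_of_nonpos (by linarith) hx.1 hq.le
      _ = 2 ^ |q| * A ^ q := by
          rw [abs_of_neg hq, Real.div_rpow hA.le zero_le_two, Real.rpow_neg zero_le_two]
          ring

lemma abs_rpow_sub_rpow_le_of_mem_Icc (q : ℝ) {A s t : ℝ} (hA : 0 < A)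
    (hs : s ∈ Set.Icc (A / 2) (2 * A)) (ht : t ∈ Set.Icc (A / 2) (2 * A)) :
    |s ^ q - t ^ q| ≤ |q| * 2 ^ |q - 1| * A ^ (q - 1) * |s - t| := by
  have hpos : ∀ x ∈ Set.Icc (A / 2) (2 * A), 0 < x := fun x hx => by linarith [hx.1]
  simpa only [Real.norm_eq_abs] using Convex.norm_image_sub_le_of_norm_hasDerivWithin_le
    (f := fun x : ℝ => x ^ q) (f' := fun x => q * x ^ (q - 1))
    (fun x hx => (Real.hasDerivAt_rpow_const (Or.inl (hpos x hx).ne')).hasDerivWithinAt)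
    (fun x hx => by
      rw [Real.norm_eq_abs, abs_mul, abs_of_nonneg (Real.rpow_nonneg (hpos x hx).le _),
        mul_assoc]
      gcongr
      exact rpow_le_two_rpow_abs_mul_rpow hA hx)
    (convex_Icc _ _) ht hs

lemma norm_pGrad_sub_pGrad_le (p : ℝ) {a b : E} (h : ‖a - b‖ ≤ ‖a‖ / 2) :
    ‖pGrad p a - pGrad p b‖ ≤ pGradLipConst p * ‖a‖ ^ (p - 2) * ‖a - b‖ := by
  rcases eq_or_ne a 0 with rfl | ha
  · obtain rfl : b = 0 := by simpa using h
    simp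
  set A := ‖a‖
  set B := ‖b‖
  have hA : 0 < A := norm_pos_iff.mpr ha
  have hAB : |A - B| ≤ ‖a - b‖ := abs_norm_sub_norm_le a b
  have hBmem : B ∈ Set.Icc (A / 2) (2 * A) := by
    constructor <;> linarith [(abs_le.mp hAB).1, (abs_le.mp hAB).2]
  have hAmem : A ∈ Set.Icc (A / 2) (2 * A) := by constructor <;> linarith
  have hmv := abs_rpow_sub_rpow_le_of_mem_Icc (p - 2) hA hAmem hBmem
  rw [show p - 2 - 1 = p - 3 by ring] at hmv
  have hA3 : A ^ (p - 3) * A = A ^ (p - 2) := by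
    rw [← Real.rpow_add_one hA.ne']; ring_nf
  have hdecomp :
      pGrad p a - pGrad p b = A ^ (p - 2) • (a - b) + (A ^ (p - 2) - B ^ (p - 2)) • b := by
    simp only [pGrad, smul_sub, sub_smul, A, B]; abel
  calc ‖pGrad p a - pGrad p b‖
      ≤ ‖A ^ (p - 2) • (a - b)‖ + ‖(A ^ (p - 2) - B ^ (p - 2)) • b‖ :=
        hdecomp ▸ norm_add_le _ _
    _ = A ^ (p - 2) * ‖a - b‖ + |A ^ (p - 2) - B ^ (p - 2)| * B := by
        rw [norm_smul, norm_smul, Real.norm_of_nonneg (by positivity), Real.norm_eq_abs]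
    _ ≤ A ^ (p - 2) * ‖a - b‖ + |p - 2| * 2 ^ |p - 3| * A ^ (p - 3) * ‖a - b‖ * (2 * A) := by
        gcongr
        · exact hmv.trans (by gcongr)
        · exact hBmem.2
    _ = pGradLipConst p * A ^ (p - 2) * ‖a - b‖ := by
        rw [pGradLipConst, ← hA3]; ring

end pGrad

section NearIdentity

variable {E : Type*} [NormedAddCommGroup E]

lemma max_rpow_le_two_rpow_mul_min {x y r : ℝ} (hx : 0 ≤ x) (hy : 0 ≤ y) (hr : 0 ≤ r)
    (hxy : x ≤ 2 * y) (hyx : y ≤ 2 * x) :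
    max (x ^ r) (y ^ r) ≤ 2 ^ r * min (x ^ r) (y ^ r) := by
  have h2 : (1 : ℝ) ≤ 2 ^ r := Real.one_le_rpow one_le_two hr
  have hx2 : x ^ r ≤ 2 ^ r * y ^ r := by
    rw [← Real.mul_rpow zero_le_two hy]; exact Real.rpow_le_rpow hx hxy hr
  have hy2 : y ^ r ≤ 2 ^ r * x ^ r := by
    rw [← Real.mul_rpow zero_le_two hx]; exact Real.rpow_le_rpow hy hyx hr
  rw [mul_min_of_nonneg _ _ (by positivity)]
  exact max_le (le_min (le_mul_of_one_le_left (by positivity) h2) hx2)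
    (le_min hy2 (le_mul_of_one_le_left (by positivity) h2))

lemma mul_norm_rpow_le_of_norm_le {M : E → E} {p ω : ℝ} (hp : 1 ≤ p) (hω : 0 ≤ ω)
    (hM : ∀ x, ‖M x‖ ≤ ω * ‖x‖) (ζ : E) :
    ω * ‖M ζ‖ ^ (p - 1) ≤ ω ^ p * ‖ζ‖ ^ (p - 1) := calc
  ω * ‖M ζ‖ ^ (p - 1) ≤ ω * (ω * ‖ζ‖) ^ (p - 1) := by gcongr; exact hM ζ
  _ = ω ^ p * ‖ζ‖ ^ (p - 1) := by
    rw [Real.mul_rpow hω (norm_nonneg ζ), ← mul_assoc, mul_comm ω,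
      ← Real.rpow_add_one' hω (by linarith), sub_add_cancel]

variable [NormedSpace ℝ E]

lemma norm_map_pGrad_map_le {M : E → E} {p ω : ℝ} (hp : 1 < p) (hω : 0 ≤ ω)
    (hM : ∀ x, ‖M x‖ ≤ ω * ‖x‖) (ζ : E) :
    ‖M (pGrad p (M ζ))‖ ≤ ω ^ p * ‖ζ‖ ^ (p - 1) :=
  (hM _).trans <| norm_pGrad hp (M ζ) ▸ mul_norm_rpow_le_of_norm_le hp.le hω hM ζ

variable {M : E →ₗ[ℝ] E} {p Λ ω ε : ℝ}

lemma norm_map_pGrad_sub_map_pGrad_le_of_two_mul_le_one (hp : 1 < p) (hΛ : 0 < Λ)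
    (hω : 0 ≤ ω) (hε : 0 ≤ ε) (hεΛ : 2 * Λ * ε ≤ 1)
    (hM : ∀ x, Λ⁻¹ * ω * ‖x‖ ≤ ‖M x‖ ∧ ‖M x‖ ≤ ω * ‖x‖) {ξ η : E}
    (hξη : ‖ξ - η‖ ≤ ε * ‖ξ‖) :
    ‖M (pGrad p (M ξ)) - M (pGrad p (M η))‖ ≤
      pGradLipConst p * Λ * ε * ω ^ p * ‖ξ‖ ^ (p - 1) := by
  set a := M ξ
  set b := M η
  have hab : ‖a - b‖ ≤ ε * Λ * ‖a‖ := calc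
    ‖a - b‖ = ‖M (ξ - η)‖ := by rw [map_sub]
    _ ≤ ω * (ε * ‖ξ‖) := (hM _).2.trans (by gcongr)
    _ = ε * Λ * (Λ⁻¹ * ω * ‖ξ‖) := by field_simp
    _ ≤ ε * Λ * ‖a‖ := by gcongr; exact (hM ξ).1
  have hhalf : ‖a - b‖ ≤ ‖a‖ / 2 := by nlinarith [norm_nonneg a]
  have hK := one_le_pGradLipConst p
  calc ‖M (pGrad p a) - M (pGrad p b)‖
      = ‖M (pGrad p a - pGrad p b)‖ := by rw [map_sub]
    _ ≤ ω * (pGradLipConst p * ‖a‖ ^ (p - 2) * (ε * Λ * ‖a‖)) :=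
        (hM _).2.trans (by gcongr; exact (norm_pGrad_sub_pGrad_le p hhalf).trans (by gcongr))
    _ = pGradLipConst p * Λ * ε * (ω * ‖a‖ ^ (p - 1)) := by
        rw [show p - 1 = p - 2 + 1 by ring, Real.rpow_add_one' (norm_nonneg a) (by linarith)]
        ring
    _ ≤ pGradLipConst p * Λ * ε * ω ^ p * ‖ξ‖ ^ (p - 1) := by
        rw [mul_assoc _ (ω ^ p)]
        exact mul_le_mul_of_nonneg_left
          (mul_norm_rpow_le_of_norm_le hp.le hω (fun x => (hM x).2) ξ) (by positivity)

lemma norm_map_pGrad_sub_map_pGrad_le (hp : 1 < p) (hΛ : 0 < Λ) (hω : 0 ≤ ω) (hε : 0 ≤ ε)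
    (hM : ∀ x, Λ⁻¹ * ω * ‖x‖ ≤ ‖M x‖ ∧ ‖M x‖ ≤ ω * ‖x‖) {ξ η : E}
    (hξη : ‖ξ - η‖ ≤ ε * ‖ξ‖) :
    ‖M (pGrad p (M ξ)) - M (pGrad p (M η))‖ ≤
      (pGradLipConst p + 4) * Λ * ε * ω ^ p * max (‖ξ‖ ^ (p - 1)) (‖η‖ ^ (p - 1)) := by
  have hK := one_le_pGradLipConst p
  rcases le_or_gt (2 * Λ * ε) 1 with hsmall | hlarge
  · calc _ ≤ pGradLipConst p * Λ * ε * ω ^ p * ‖ξ‖ ^ (p - 1) :=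
          norm_map_pGrad_sub_map_pGrad_le_of_two_mul_le_one hp hΛ hω hε hsmall hM hξη
      _ ≤ (pGradLipConst p + 4) * Λ * ε * ω ^ p * max (‖ξ‖ ^ (p - 1)) (‖η‖ ^ (p - 1)) := by
          gcongr
          · linarith
          · exact le_max_left _ _
  · have hF := norm_map_pGrad_map_le (M := M) hp hω (fun x => (hM x).2)
    calc _ ≤ ω ^ p * ‖ξ‖ ^ (p - 1) + ω ^ p * ‖η‖ ^ (p - 1) :=
          (norm_sub_le _ _).trans (add_le_add (hF ξ) (hF η))
      _ ≤ 2 * ω ^ p * max (‖ξ‖ ^ (p - 1)) (‖η‖ ^ (p - 1)) := by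
          have := le_max_left (‖ξ‖ ^ (p - 1)) (‖η‖ ^ (p - 1))
          have := le_max_right (‖ξ‖ ^ (p - 1)) (‖η‖ ^ (p - 1))
          have : 0 ≤ ω ^ p := by positivity
          nlinarith
      _ ≤ (pGradLipConst p + 4) * Λ * ε * ω ^ p * max (‖ξ‖ ^ (p - 1)) (‖η‖ ^ (p - 1)) := by
          have h2 : 2 ≤ (pGradLipConst p + 4) * Λ * ε := by nlinarith
          have := mul_le_mul_of_nonneg_right h2
            (by positivity : 0 ≤ ω ^ p * max (‖ξ‖ ^ (p - 1)) (‖η‖ ^ (p - 1)))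
          linarith

theorem norm_map_pGrad_sub_near_id_le {T T' : E → E} (hp : 1 < p) (hΛ : 0 < Λ) (hω : 0 ≤ ω)
    (hε : 0 ≤ ε) (hε₂ : ε ≤ 1 / 2) (hM : ∀ x, Λ⁻¹ * ω * ‖x‖ ≤ ‖M x‖ ∧ ‖M x‖ ≤ ω * ‖x‖)
    (hT : ∀ x, ‖x - T x‖ ≤ ε * ‖x‖) (hT' : ∀ x, ‖x - T' x‖ ≤ ε * ‖x‖) (ξ : E) :
    ‖M (pGrad p (M ξ)) - T' (M (pGrad p (M (T ξ))))‖ ≤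
      2 ^ (p - 1) * ((pGradLipConst p + 4) * Λ + 1) * ε * ω ^ p *
        min (‖ξ‖ ^ (p - 1)) (‖T ξ‖ ^ (p - 1)) := by
  set η := T ξ
  set F := fun ζ => M (pGrad p (M ζ))
  have hK := one_le_pGradLipConst p
  have hξη : ‖ξ‖ ≤ 2 * ‖η‖ := by
    have := norm_sub_norm_le ξ η; nlinarith [hT ξ, norm_nonneg ξ]
  have hηξ : ‖η‖ ≤ 2 * ‖ξ‖ := by
    have := norm_sub_norm_le η ξ; rw [norm_sub_rev] at this; nlinarith [hT ξ, norm_nonneg ξ]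
  have hmax := max_rpow_le_two_rpow_mul_min (norm_nonneg ξ) (norm_nonneg η)
    (by linarith : 0 ≤ p - 1) hξη hηξ
  calc ‖F ξ - T' (F η)‖ = ‖(F ξ - F η) + (F η - T' (F η))‖ := by congr 1; abel
    _ ≤ (pGradLipConst p + 4) * Λ * ε * ω ^ p * max (‖ξ‖ ^ (p - 1)) (‖η‖ ^ (p - 1))
        + ε * (ω ^ p * max (‖ξ‖ ^ (p - 1)) (‖η‖ ^ (p - 1))) := by
        refine (norm_add_le _ _).trans (add_le_add
          (norm_map_pGrad_sub_map_pGrad_le hp hΛ hω hε hM (hT ξ)) ((hT' _).trans ?_))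
        gcongr
        exact (norm_map_pGrad_map_le hp hω (fun x => (hM x).2) η).trans
          (by gcongr; exact le_max_right _ _)
    _ = ((pGradLipConst p + 4) * Λ + 1) * ε * ω ^ p * max (‖ξ‖ ^ (p - 1)) (‖η‖ ^ (p - 1)) := by
        ring
    _ ≤ ((pGradLipConst p + 4) * Λ + 1) * ε * ω ^ p *
          (2 ^ (p - 1) * min (‖ξ‖ ^ (p - 1)) (‖η‖ ^ (p - 1))) := by
        gcongr
    _ = _ := by ring

end NearIdentity

open scoped Matrix.Norms.Frobenius

lemma euclNorm_eq_norm {k : ℕ} (x : Fin k → ℝ) : euclNorm x = ‖WithLp.toLp 2 x‖ := by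
  simp [euclNorm, EuclideanSpace.norm_eq]

lemma norm_toLp_mulVec_le {𝕜 m n : Type*} [RCLike 𝕜] [Fintype m] [Fintype n]
    (A : Matrix m n 𝕜) (x : n → 𝕜) :
    ‖WithLp.toLp 2 (A *ᵥ x)‖ ≤ ‖A‖ * ‖WithLp.toLp 2 x‖ := by
  rw [← frobenius_norm_replicateCol (ι := Unit), ← frobenius_norm_replicateCol (ι := Unit),
    replicateCol_mulVec]
  exact frobenius_norm_mul _ _

lemma norm_sub_toLpLin_one_sub_le {𝕜 n : Type*} [RCLike 𝕜] [Fintype n] [DecidableEq n]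
    (B : Matrix n n 𝕜) (x : EuclideanSpace 𝕜 n) :
    ‖x - toEuclideanLin (1 - B) x‖ ≤ ‖B‖ * ‖x‖ := by
  simpa [toLpLin_apply, Matrix.sub_mulVec] using norm_toLp_mulVec_le B (WithLp.ofLp x)

def shearOffDiag (m : ℕ) (v : Fin m → ℝ) : Matrix (Fin (m + 1)) (Fin (m + 1)) ℝ :=
  Matrix.of (fun i j : Fin (m + 1) =>
    if h : i = Fin.last m ∧ (j : ℕ) < m then -v ⟨(j : ℕ), h.2⟩ else 0)

lemma shearN_eq_one_add (m : ℕ) (v : Fin m → ℝ) : shearN m v = 1 + shearOffDiag m v := rfl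

lemma shearOffDiag_mul_self (m : ℕ) (v : Fin m → ℝ) :
    shearOffDiag m v * shearOffDiag m v = 0 := by
  ext i j
  rw [Matrix.mul_apply, Matrix.zero_apply]
  refine Finset.sum_eq_zero fun k _ => ?_
  simp only [shearOffDiag, of_apply]
  split_ifs with hik hkj
  · exact absurd hik.2 (by simp [hkj.1])
  all_goals simp

lemma inv_shearN (m : ℕ) (v : Fin m → ℝ) : (shearN m v)⁻¹ = 1 - shearOffDiag m v := by
  refine Matrix.inv_eq_right_inv ?_
  rw [shearN_eq_one_add, add_mul, one_mul, mul_sub, mul_one, shearOffDiag_mul_self]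
  abel

lemma norm_shearOffDiag (m : ℕ) (v : Fin m → ℝ) : ‖shearOffDiag m v‖ = euclNorm v := by
  rw [frobenius_norm_def, euclNorm, Real.sqrt_eq_rpow]
  simp [shearOffDiag, Fin.sum_univ_castSucc]

theorem stmt9_general (m : ℕ) (p Λ : ℝ) (hp : 1 < p) (hΛ : 1 ≤ Λ) :
    ∃ c : ℝ, 0 < c ∧
      ∀ M₀ : Matrix (Fin (m + 1)) (Fin (m + 1)) ℝ, M₀.IsSymm → M₀.PosDef →
      (∀ ξ : Fin (m + 1) → ℝ,
        Λ⁻¹ * specNorm M₀ * euclNorm ξ ≤ euclNorm (M₀.mulVec ξ) ∧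
        euclNorm (M₀.mulVec ξ) ≤ specNorm M₀ * euclNorm ξ) →
      ∀ v : Fin m → ℝ, euclNorm v ≤ 1 / 2 →
      ∀ ξ : Fin (m + 1) → ℝ,
        euclNorm (fun i =>
            euclNorm (M₀.mulVec ξ) ^ (p - 2) * (M₀ * M₀).mulVec ξ i -
            ((shearN m v)⁻¹ᵀ.mulVec (fun k =>
              euclNorm (M₀.mulVec ((shearN m v)⁻¹.mulVec ξ)) ^ (p - 2) *
                (M₀ * M₀).mulVec ((shearN m v)⁻¹.mulVec ξ) k)) i) ≤
          c * euclNorm v * specNorm M₀ ^ p *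
            min (euclNorm ξ ^ (p - 1)) (euclNorm ((shearN m v)⁻¹.mulVec ξ) ^ (p - 1)) := by
  have hK := one_le_pGradLipConst p
  refine ⟨2 ^ (p - 1) * ((pGradLipConst p + 4) * Λ + 1), by positivity, ?_⟩
  intro M₀ _ _ hM₀ v hv ξ
  have hT : ∀ x, ‖x - toEuclideanLin (shearN m v)⁻¹ x‖ ≤ euclNorm v * ‖x‖ := fun x => by
    simpa [inv_shearN, norm_shearOffDiag] using
      norm_sub_toLpLin_one_sub_le (shearOffDiag m v) x
  have hT' : ∀ x, ‖x - toEuclideanLin (shearN m v)⁻¹ᵀ x‖ ≤ euclNorm v * ‖x‖ := fun x => by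
    simpa [inv_shearN, norm_shearOffDiag] using
      norm_sub_toLpLin_one_sub_le (shearOffDiag m v)ᵀ x
  have hM : ∀ x, Λ⁻¹ * specNorm M₀ * ‖x‖ ≤ ‖toEuclideanLin M₀ x‖ ∧
      ‖toEuclideanLin M₀ x‖ ≤ specNorm M₀ * ‖x‖ := fun x => by
    simpa [euclNorm_eq_norm, toLpLin_apply] using hM₀ (WithLp.ofLp x)
  have key := norm_map_pGrad_sub_near_id_le (ω := specNorm M₀) (ε := euclNorm v) hp
    (by linarith) (norm_nonneg _) (Real.sqrt_nonneg _) hv hM hT hT' (WithLp.toLp 2 ξ)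
  have hsmul : ∀ (c : ℝ) (w : Fin (m + 1) → ℝ), (fun k => c * w k) = c • w := fun _ _ => rfl
  convert key using 3
  · rw [euclNorm_eq_norm]
    congr 1
    ext i
    simp only [hsmul]
    simp [pGrad, toLpLin_apply, euclNorm_eq_norm, Matrix.mulVec_smul, Matrix.mul_assoc]
  all_goals simp [euclNorm_eq_norm, toLpLin_apply]

/-- Let `n = m + 1 ≥ 2`, `p ∈ (1, ∞)` and `Λ ≥ 1`.  There is a constant
`c`, depending only on `n`, `p` and `Λ`, such that: if `M₀` is a symmetric positive-definite
matrix with `ω₀ := ‖M₀‖` satisfying `Λ⁻¹ ω₀ |ξ| ≤ |M₀ ξ| ≤ ω₀ |ξ|` for all `ξ`, and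
`v ∈ ℝ^{n-1}` with `|v| ≤ 1/2`, `N := N(v)`, `T := N⁻¹`, then for all `ξ`:
`| |M₀ξ|^{p-2} M₀² ξ - Tᵗ |M₀Tξ|^{p-2} M₀² Tξ | ≤ c |v| ω₀^p min(|ξ|^{p-1}, |Tξ|^{p-1})`. -/
theorem stmt9 (m : ℕ) (hm : 1 ≤ m) (p Λ : ℝ) (hp : 1 < p) (hΛ : 1 ≤ Λ) :
    ∃ c : ℝ, 0 < c ∧
      ∀ M₀ : Matrix (Fin (m + 1)) (Fin (m + 1)) ℝ, M₀.IsSymm → M₀.PosDef →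
      (∀ ξ : Fin (m + 1) → ℝ,
        Λ⁻¹ * specNorm M₀ * euclNorm ξ ≤ euclNorm (M₀.mulVec ξ) ∧
        euclNorm (M₀.mulVec ξ) ≤ specNorm M₀ * euclNorm ξ) →
      ∀ v : Fin m → ℝ, euclNorm v ≤ 1 / 2 →
      ∀ ξ : Fin (m + 1) → ℝ,
        euclNorm (fun i =>
            euclNorm (M₀.mulVec ξ) ^ (p - 2) * (M₀ * M₀).mulVec ξ i -
            ((shearN m v)⁻¹ᵀ.mulVec (fun k =>
              euclNorm (M₀.mulVec ((shearN m v)⁻¹.mulVec ξ)) ^ (p - 2) *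
                (M₀ * M₀).mulVec ((shearN m v)⁻¹.mulVec ξ) k)) i) ≤
          c * euclNorm v * specNorm M₀ ^ p *
            min (euclNorm ξ ^ (p - 1)) (euclNorm ((shearN m v)⁻¹.mulVec ξ) ^ (p - 1)) :=
  stmt9_general m p Λ hp hΛ
end

section
/- Let ε ∈ (0,1), set α := (π/2)/(π/2 + arctan ε), and let Ω := {x = (x₁,x₂) ∈ ℝ² : x₁² + x₂² < 1 and x₂ > −ε|x₁|}. Identify ℝ² with ℂ via z = x₁ + i x₂ and define u : ℝ² → ℝ by u(x) := Re( (−i z)^α ), using the principal complex power (with 0^α := 0). Then u is twice continuously differentiable on Ω with vanishing Laplacian, ∂²u/∂x₁² + ∂²u/∂x₂² = 0 on Ω (i.e. u is harmonic on Ω), and u(x) = 0 for every x with x₁² + x₂² ≤ 1 and x₂ = −ε|x₁|. -/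
/-!
`u` is the real part of the holomorphic function `z ↦ (-i z)^α` on the open set where `-i z`
avoids the branch cut, and `Ω` lies in that set; real parts of holomorphic functions are smooth
and harmonic because moving along `i` multiplies the complex derivative by `i`, so the two pure
second derivatives are `Re f''` and `Re (i² f'')`. On the rays `x₂ = -ε|x₁|` the argument of
`-i z` is `±(π/2 + arctan ε)`, so `Re (-i z)^α = |z|^α cos(±π/2) = 0`.
-/

open Real

noncomputable def coordLaplacian (u : ℝ × ℝ → ℝ) (x : ℝ × ℝ) : ℝ :=
  deriv (fun t => deriv (fun s => u (s, x.2)) t) x.1 +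
    deriv (fun t => deriv (fun s => u (x.1, s)) t) x.2

section Holomorphic

open Complex

lemma HasDerivAt.re_horizontal {g : ℂ → ℂ} {g' : ℂ} {a b : ℝ}
    (h : HasDerivAt g g' (a + b * I)) :
    HasDerivAt (fun s : ℝ => (g (s + b * I)).re) g'.re a :=
  (h.comp_add_const (a : ℂ) (b * I)).real_of_complex

lemma HasDerivAt.re_vertical {g : ℂ → ℂ} {g' : ℂ} {a b : ℝ}
    (h : HasDerivAt g g' (a + b * I)) :
    HasDerivAt (fun s : ℝ => (g (a + s * I)).re) (g' * I).re b := by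
  have hline : HasDerivAt (fun w : ℂ => a + w * I) I b := by
    simpa using ((hasDerivAt_id (b : ℂ)).mul_const I).const_add (a : ℂ)
  exact (h.comp (b : ℂ) hline).real_of_complex

variable {f : ℂ → ℂ} {U : Set ℂ}

lemma contDiffOn_re_comp_of_differentiableOn (hf : DifferentiableOn ℂ f U) (hU : IsOpen U)
    {n : WithTop ℕ∞} :
    ContDiffOn ℝ n (fun x : ℝ × ℝ => (f (x.1 + x.2 * I)).re) {x | (x.1 + x.2 * I : ℂ) ∈ U} := by
  have hline : ContDiff ℝ n (fun x : ℝ × ℝ => (x.1 + x.2 * I : ℂ)) := by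
    convert equivRealProdCLM.symm.contDiff using 1
    exact funext fun x => (equivRealProdCLM_symm_apply x).symm
  exact reCLM.contDiff.comp_contDiffOn
    (((hf.contDiffOn hU).restrict_scalars ℝ).comp hline.contDiffOn fun _ hx => hx)

lemma coordLaplacian_re_comp_eq_zero_of_differentiableOn (hf : DifferentiableOn ℂ f U)
    (hU : IsOpen U) {x : ℝ × ℝ} (hx : (x.1 + x.2 * I : ℂ) ∈ U) :
    coordLaplacian (fun x : ℝ × ℝ => (f (x.1 + x.2 * I)).re) x = 0 := by
  set a := x.1
  set b := x.2
  have hasDeriv {z : ℂ} (hz : z ∈ U) : HasDerivAt f (deriv f z) z :=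
    (hf.differentiableAt (hU.mem_nhds hz)).hasDerivAt
  have hasDeriv' : HasDerivAt (deriv f) (deriv (deriv f) (a + b * I)) (a + b * I) :=
    ((hf.deriv hU).differentiableAt (hU.mem_nhds hx)).hasDerivAt
  have h_horizontal : (fun t => deriv (fun s : ℝ => (f (s + b * I)).re) t)
      =ᶠ[nhds a] fun t => (deriv f (t + b * I)).re := by
    filter_upwards [(by fun_prop : Continuous fun t : ℝ => (t + b * I : ℂ)).continuousAt
      |>.preimage_mem_nhds (hU.mem_nhds hx)] with t ht
    exact (hasDeriv ht).re_horizontal.deriv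
  have h_vertical : (fun t => deriv (fun s : ℝ => (f (a + s * I)).re) t)
      =ᶠ[nhds b] fun t => (deriv f (a + t * I) * I).re := by
    filter_upwards [(by fun_prop : Continuous fun t : ℝ => (a + t * I : ℂ)).continuousAt
      |>.preimage_mem_nhds (hU.mem_nhds hx)] with t ht
    exact (hasDeriv ht).re_vertical.deriv
  have hxx := (hasDeriv'.re_horizontal.congr_of_eventuallyEq h_horizontal).deriv
  have hyy := ((hasDeriv'.mul_const I).re_vertical.congr_of_eventuallyEq h_vertical).deriv
  simp only [coordLaplacian] at hxx hyy ⊢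
  rw [hxx, hyy, mul_assoc, I_mul_I]
  simp

end Holomorphic

section NegIMulCpow

open Complex

lemma neg_I_mul_mem_slitPlane_iff {z : ℂ} : -I * z ∈ slitPlane ↔ 0 < z.im ∨ z.re ≠ 0 := by
  simp [mem_slitPlane_iff]

lemma isOpen_neg_I_mul_mem_slitPlane : IsOpen {w : ℂ | -I * w ∈ slitPlane} :=
  isOpen_slitPlane.preimage (by fun_prop)

lemma differentiableOn_neg_I_mul_cpow (c : ℂ) :
    DifferentiableOn ℂ (fun w => (-I * w) ^ c) {w | -I * w ∈ slitPlane} :=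
  fun _ hw => ((differentiableAt_id.const_mul (-I)).cpow_const hw).differentiableWithinAt

lemma pi_div_two_add_arctan_pos (ε : ℝ) : 0 < π / 2 + Real.arctan ε := by
  linarith [Real.neg_pi_div_two_lt_arctan ε]

lemma arg_neg_add_I (ε : ℝ) : arg (-ε + I) = π / 2 + Real.arctan ε := by
  have hθ : Real.arctan ε + π / 2 ∈ Set.Ioc (-π) π := by
    constructor <;> linarith [Real.neg_pi_div_two_lt_arctan ε, Real.arctan_lt_pi_div_two ε,
      pi_pos]
  have hr : 0 < √(1 + ε ^ 2) := by positivity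
  have hpolar : (-ε + I : ℂ) = (√(1 + ε ^ 2) : ℝ) * (Complex.cos (Real.arctan ε + π / 2 : ℝ)
      + Complex.sin (Real.arctan ε + π / 2 : ℝ) * I) := by
    rw [← ofReal_cos, ← ofReal_sin, Real.cos_add_pi_div_two, Real.sin_add_pi_div_two,
      Real.sin_arctan, Real.cos_arctan]
    apply Complex.ext <;> simp <;> field_simp
  rw [hpolar, arg_real_mul _ hr, arg_cos_add_sin_mul_I hθ, add_comm]

lemma abs_arg_neg_I_mul_of_im_eq {ε a b : ℝ} (ha : a ≠ 0) (hb : b = -ε * |a|) :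
    |arg (-I * (a + b * I))| = π / 2 + Real.arctan ε := by
  subst hb
  have hpos := pi_div_two_add_arctan_pos ε
  have hr : 0 < |a| := abs_pos.2 ha
  rcases ha.lt_or_gt with hneg | hpos'
  · have hw : -I * (a + ((-ε * |a| : ℝ) : ℂ) * I) = (|a| : ℝ) * (-ε + I) := by
      rw [abs_of_neg hneg]
      apply Complex.ext <;> simp [mul_comm]
    rw [hw, arg_real_mul _ hr, arg_neg_add_I, abs_of_pos hpos]
  · have hw : -I * (a + ((-ε * |a| : ℝ) : ℂ) * I) = (|a| : ℝ) * (starRingEnd ℂ) (-ε + I) := by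
      rw [abs_of_pos hpos']
      apply Complex.ext <;> simp [mul_comm]
    rw [hw, arg_real_mul _ hr, arg_conj, arg_neg_add_I,
      if_neg (by linarith [Real.arctan_lt_pi_div_two ε]), abs_neg, abs_of_pos hpos]

lemma re_cpow_ofReal_eq_zero_of_mul_abs_arg {w : ℂ} {α : ℝ} (h : α * |arg w| = π / 2) :
    (w ^ (α : ℂ)).re = 0 := by
  have hcos : Real.cos (arg w * α) = Real.cos (π / 2) := by
    rw [← h]
    rcases abs_cases (arg w) with ⟨habs, _⟩ | ⟨habs, _⟩
    · rw [habs, mul_comm]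
    · rw [habs, mul_neg, Real.cos_neg, mul_comm]
  rw [cpow_ofReal_re, hcos, Real.cos_pi_div_two, mul_zero]

lemma re_neg_I_mul_cpow_eq_zero_of_im_eq {ε α a b : ℝ}
    (hα : α * (π / 2 + Real.arctan ε) = π / 2) (hb : b = -ε * |a|) :
    ((-I * (a + b * I)) ^ (α : ℂ)).re = 0 := by
  rcases eq_or_ne a 0 with rfl | ha
  · subst hb
    have hα0 : (α : ℂ) ≠ 0 := by
      rintro h
      rw [ofReal_eq_zero.1 h, zero_mul] at hα
      linarith [pi_pos]
    simp [zero_cpow hα0]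
  · exact re_cpow_ofReal_eq_zero_of_mul_abs_arg (by rw [abs_arg_neg_I_mul_of_im_eq ha hb, hα])

end NegIMulCpow

theorem stmt15_general (ε : ℝ)
    (α : ℝ) (hα : α = (π / 2) / (π / 2 + arctan ε))
    (Ω : Set (ℝ × ℝ)) (hΩ : Ω = {x : ℝ × ℝ | x.1 ^ 2 + x.2 ^ 2 < 1 ∧ -ε * |x.1| < x.2})
    (u : ℝ × ℝ → ℝ)
    (hu : u = fun x : ℝ × ℝ =>
      ((-Complex.I * ((x.1 : ℂ) + (x.2 : ℂ) * Complex.I)) ^ (α : ℂ)).re) :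
    ContDiffOn ℝ 2 u Ω ∧
    (∀ x ∈ Ω,
      deriv (fun t => deriv (fun s => u (s, x.2)) t) x.1 +
        deriv (fun t => deriv (fun s => u (x.1, s)) t) x.2 = 0) ∧
    (∀ x : ℝ × ℝ, x.1 ^ 2 + x.2 ^ 2 ≤ 1 → x.2 = -ε * |x.1| → u x = 0) := by
  have hΩ_sub : ∀ x ∈ Ω,
      (x.1 + x.2 * Complex.I : ℂ) ∈ {w : ℂ | -Complex.I * w ∈ Complex.slitPlane} := by
    rintro ⟨a, b⟩ hx
    rw [hΩ] at hx
    refine neg_I_mul_mem_slitPlane_iff.2 ?_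
    rcases eq_or_ne a 0 with rfl | ha
    · left; simpa using hx.2
    · right; simpa using ha
  have hf := differentiableOn_neg_I_mul_cpow (α : ℂ)
  have hα' : α * (π / 2 + arctan ε) = π / 2 := by
    rw [hα, div_mul_cancel₀ _ (pi_div_two_add_arctan_pos ε).ne']
  subst hu
  exact ⟨(contDiffOn_re_comp_of_differentiableOn hf isOpen_neg_I_mul_mem_slitPlane).mono hΩ_sub,
    fun x hx => coordLaplacian_re_comp_eq_zero_of_differentiableOn hf
      isOpen_neg_I_mul_mem_slitPlane (hΩ_sub x hx),
    fun x _ hx => re_neg_I_mul_cpow_eq_zero_of_im_eq hα' hx⟩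

/-- Let `ε ∈ (0,1)`, `α := (π/2)/(π/2 + arctan ε)` and
`Ω := {x ∈ ℝ² : |x| < 1, x₂ > -ε|x₁|}`.  Identifying `ℝ²` with `ℂ` via `z = x₁ + i x₂` and
setting `u(x) := Re((-i z)^α)` (principal complex power, `0^α := 0`), the function `u` is
twice continuously differentiable on `Ω` with vanishing Laplacian
`∂²u/∂x₁² + ∂²u/∂x₂² = 0` on `Ω` (i.e. `u` is harmonic on `Ω`), and `u` vanishes on the
rays `x₂ = -ε|x₁|` inside the closed unit disc. -/
theorem stmt15 (ε : ℝ) (hε0 : 0 < ε) (hε1 : ε < 1)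
    (α : ℝ) (hα : α = (π / 2) / (π / 2 + arctan ε))
    (Ω : Set (ℝ × ℝ)) (hΩ : Ω = {x : ℝ × ℝ | x.1 ^ 2 + x.2 ^ 2 < 1 ∧ -ε * |x.1| < x.2})
    (u : ℝ × ℝ → ℝ)
    (hu : u = fun x : ℝ × ℝ =>
      ((-Complex.I * ((x.1 : ℂ) + (x.2 : ℂ) * Complex.I)) ^ (α : ℂ)).re) :
    ContDiffOn ℝ 2 u Ω ∧
    (∀ x ∈ Ω,
      deriv (fun t => deriv (fun s => u (s, x.2)) t) x.1 +
        deriv (fun t => deriv (fun s => u (x.1, s)) t) x.2 = 0) ∧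
    (∀ x : ℝ × ℝ, x.1 ^ 2 + x.2 ^ 2 ≤ 1 → x.2 = -ε * |x.1| → u x = 0) :=
  stmt15_general ε α hα Ω hΩ u hu
end

section
/- Let ε ∈ (0,1), set α := (π/2)/(π/2 + arctan ε), and let Ω := {x = (x₁,x₂) ∈ ℝ² : x₁² + x₂² < 1 and x₂ > −ε|x₁|}. Define u : ℝ² → ℝ by u(x) := Re( (−i (x₁ + i x₂))^α ), using the principal complex power (with 0^α := 0). Then for every x ∈ Ω, u is (Fréchet) differentiable at x and the Euclidean norm of its gradient satisfies ‖∇u(x)‖ = α (x₁² + x₂²)^{(α−1)/2}, i.e. ‖∇u(x)‖ = α ‖x‖^{α−1}. -/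
/-!
In the coordinate `w = -i (x₁ + i x₂)`, a rotation of the plane by a quarter turn, the domain lies
in the slit plane, where `w ↦ w ^ α` is holomorphic. The real gradient of the real part of a
holomorphic function has the modulus of its complex derivative (Cauchy–Riemann), and an isometric
change of variables does not change gradient norms, so `‖∇u(x)‖ = |α w ^ (α - 1)| = α ‖x‖ ^ (α - 1)`.
-/

open Real

section

open Complex ComplexConjugate

noncomputable def quarterTurnCoord : EuclideanSpace ℝ (Fin 2) ≃ₗᵢ[ℝ] ℂ :=
  orthonormalBasisOneI.repr.symm.trans (rotation (Circle.exp (-(π / 2))))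

lemma quarterTurnCoord_apply (x : EuclideanSpace ℝ (Fin 2)) :
    quarterTurnCoord x = -I * (x 0 + x 1 * I) := by
  rw [quarterTurnCoord, LinearIsometryEquiv.trans_apply, rotation_apply, Circle.coe_exp,
    orthonormalBasisOneI_repr_symm_apply, exp_mul_I]
  push_cast
  simp [Complex.cos_neg, Complex.sin_neg]

lemma Complex.mem_slitPlane_of_neg_mul_abs_im_lt_re {ε : ℝ} {z : ℂ} (h : -ε * |z.im| < z.re) :
    z ∈ slitPlane := by
  rw [mem_slitPlane_iff]
  by_cases him : z.im = 0
  · left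
    simpa [him] using h
  · exact Or.inr him

lemma HasDerivAt.hasFDerivAt_re {f : ℂ → ℂ} {c w : ℂ} (h : HasDerivAt f c w) :
    HasFDerivAt (fun z => (f z).re) (innerSL ℝ (conj c)) w := by
  refine (reCLM.hasFDerivAt.comp w (h.hasFDerivAt.restrictScalars ℝ)).congr_fderiv ?_
  ext z
  simp [Complex.inner, mul_comm]

lemma HasDerivAt.norm_fderiv_re_comp_linearIsometryEquiv {E : Type*} [NormedAddCommGroup E]
    [NormedSpace ℝ E] (L : E ≃ₗᵢ[ℝ] ℂ) {f : ℂ → ℂ} {c : ℂ} {x : E} (h : HasDerivAt f c (L x)) :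
    DifferentiableAt ℝ (fun y => (f (L y)).re) x ∧
      ‖fderiv ℝ (fun y => (f (L y)).re) x‖ = ‖c‖ := by
  have hD := h.hasFDerivAt_re.comp x (L : E →L[ℝ] ℂ).hasFDerivAt
  refine ⟨hD.differentiableAt, ?_⟩
  rw [show (fun y => (f (L y)).re) = (fun z => (f z).re) ∘ L from rfl, hD.fderiv]
  simp [innerSL_apply_norm]

lemma Complex.norm_ofReal_mul_cpow_sub_one {α : ℝ} (hα : 0 ≤ α) (w : ℂ) :
    ‖(α : ℂ) * w ^ ((α : ℂ) - 1)‖ = α * ‖w‖ ^ (α - 1) := by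
  rw [norm_mul, norm_real, Real.norm_of_nonneg hα, ← ofReal_one, ← ofReal_sub, norm_cpow_real]

lemma EuclideanSpace.norm_rpow_eq_sum_sq_rpow_half (x : EuclideanSpace ℝ (Fin 2)) (s : ℝ) :
    ‖x‖ ^ s = (x 0 ^ 2 + x 1 ^ 2) ^ (s / 2) := by
  rw [← Fin.sum_univ_two (fun i => x i ^ 2), ← EuclideanSpace.real_norm_sq_eq,
    ← Real.rpow_natCast, ← Real.rpow_mul (norm_nonneg x)]
  ring_nf

end

theorem stmt16_general (ε : ℝ)
    (α : ℝ) (hα : α = (π / 2) / (π / 2 + arctan ε))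
    (Ω : Set (EuclideanSpace ℝ (Fin 2)))
    (hΩ : Ω = {x : EuclideanSpace ℝ (Fin 2) |
      (x 0) ^ 2 + (x 1) ^ 2 < 1 ∧ -ε * |x 0| < x 1})
    (u : EuclideanSpace ℝ (Fin 2) → ℝ)
    (hu : u = fun x : EuclideanSpace ℝ (Fin 2) =>
      ((-Complex.I * ((x 0 : ℂ) + (x 1 : ℂ) * Complex.I)) ^ (α : ℂ)).re) :
    ∀ x ∈ Ω,
      DifferentiableAt ℝ u x ∧
      ‖fderiv ℝ u x‖ = α * ((x 0) ^ 2 + (x 1) ^ 2) ^ ((α - 1) / 2) ∧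
      ‖fderiv ℝ u x‖ = α * ‖x‖ ^ (α - 1) := by
  have hα0 : 0 ≤ α := hα ▸ div_nonneg (by positivity) (by linarith [neg_pi_div_two_lt_arctan ε])
  have hu' : u = fun x => (quarterTurnCoord x ^ (α : ℂ)).re := by
    simp only [hu, quarterTurnCoord_apply]
  subst hΩ hu'
  rintro x ⟨-, hx⟩
  have hslit : quarterTurnCoord x ∈ Complex.slitPlane :=
    Complex.mem_slitPlane_of_neg_mul_abs_im_lt_re (ε := ε) (by simpa [quarterTurnCoord_apply] using hx)
  obtain ⟨hdiff, hnorm⟩ := (Complex.hasStrictDerivAt_cpow_const hslit).hasDerivAt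
    |>.norm_fderiv_re_comp_linearIsometryEquiv quarterTurnCoord
  rw [Complex.norm_ofReal_mul_cpow_sub_one hα0, LinearIsometryEquiv.norm_map] at hnorm
  exact ⟨hdiff, by rw [hnorm, EuclideanSpace.norm_rpow_eq_sum_sq_rpow_half], hnorm⟩

/-- Let `ε ∈ (0,1)`, `α := (π/2)/(π/2 + arctan ε)` and
`Ω := {x ∈ ℝ² : |x| < 1, x₂ > -ε|x₁|}`.  With `u(x) := Re((-i(x₁ + i x₂))^α)` (principal
complex power, `0^α := 0`), for every `x ∈ Ω` the function `u` is Fréchet differentiable at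
`x` and the Euclidean norm of its gradient satisfies
`‖∇u(x)‖ = α (x₁² + x₂²)^{(α-1)/2} = α ‖x‖^{α-1}`. -/
theorem stmt16 (ε : ℝ) (hε0 : 0 < ε) (hε1 : ε < 1)
    (α : ℝ) (hα : α = (π / 2) / (π / 2 + arctan ε))
    (Ω : Set (EuclideanSpace ℝ (Fin 2)))
    (hΩ : Ω = {x : EuclideanSpace ℝ (Fin 2) |
      (x 0) ^ 2 + (x 1) ^ 2 < 1 ∧ -ε * |x 0| < x 1})
    (u : EuclideanSpace ℝ (Fin 2) → ℝ)
    (hu : u = fun x : EuclideanSpace ℝ (Fin 2) =>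
      ((-Complex.I * ((x 0 : ℂ) + (x 1 : ℂ) * Complex.I)) ^ (α : ℂ)).re) :
    ∀ x ∈ Ω,
      DifferentiableAt ℝ u x ∧
      ‖fderiv ℝ u x‖ = α * ((x 0) ^ 2 + (x 1) ^ 2) ^ ((α - 1) / 2) ∧
      ‖fderiv ℝ u x‖ = α * ‖x‖ ^ (α - 1) :=
  stmt16_general ε α hα Ω hΩ u hu
end
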